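/- arXiv:1705.09279 — 5 statements merged into one kernel-verified Lean document; each statement's English description precedes it below -/
import Mathlib

section
/- Let p̂ be a positive random variable with E[p̂] = c > 0 and E[p̂^{-1}] < ∞. Write Δ = (p̂ - c)/c. Then |log c − E[log p̂] − (1/2)·E[Δ²]| ≤ (E[(1+Δ)^{-1}])^{1/2} · (E[Δ⁶]/5)^{1/2}. -/
/-!
With `F t = log (1 + t) - t + t² / 2` we have `F' t = t² / (1 + t)`, so Cauchy–Schwarz applied
to `F t = ∫₀ᵗ s² / (1 + s) ds` gives `|F t| ≤ |t|³ / √(5 (1 + t))`; we prove this bound by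
checking that both `F` and `t³ / √(5 (1 + t)) - F t` are monotone on `(-1, ∞)` and vanish at `0`.
Since `E Δ = 0`, the quantity to bound is `-E[F Δ]`, and a second application of Cauchy–Schwarz,
now in `L²(μ)` to `|Δ|³ / √5` and `(1 + Δ)^(-1/2)`, gives the claim.
-/

open MeasureTheory Set

theorem abs_le_abs_of_hasDerivAt_of_deriv_le {s : Set ℝ} (hs : Convex ℝ s) {f g f' g' : ℝ → ℝ}
    (hf : ∀ x ∈ s, HasDerivAt f (f' x) x) (hg : ∀ x ∈ s, HasDerivAt g (g' x) x)
    (hf'_nonneg : ∀ x ∈ s, 0 ≤ f' x) (hf'_le : ∀ x ∈ s, f' x ≤ g' x)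
    {a t : ℝ} (ha : a ∈ s) (hfa : f a = 0) (hga : g a = 0) (ht : t ∈ s) : |f t| ≤ |g t| := by
  have monotoneOn_of_deriv {h h' : ℝ → ℝ} (hh : ∀ x ∈ s, HasDerivAt h (h' x) x)
      (hh' : ∀ x ∈ s, 0 ≤ h' x) : MonotoneOn h s :=
    monotoneOn_of_hasDerivWithinAt_nonneg hs
      (fun x hx => (hh x hx).continuousAt.continuousWithinAt)
      (fun x hx => (hh x (interior_subset hx)).hasDerivWithinAt)
      (fun x hx => hh' x (interior_subset hx))
  have hf_mono : MonotoneOn f s := monotoneOn_of_deriv hf hf'_nonneg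
  have hgf_mono : MonotoneOn (g - f) s :=
    monotoneOn_of_deriv (fun x hx => (hg x hx).sub (hf x hx)) fun x hx => sub_nonneg.2 (hf'_le x hx)
  rcases le_total a t with hat | hta
  · have hf_le := hf_mono ha ht hat
    have hgf_le := hgf_mono ha ht hat
    simp only [Pi.sub_apply] at hgf_le
    rw [abs_of_nonneg (by linarith), abs_of_nonneg (by linarith)]
    linarith
  · have hf_le := hf_mono ht ha hta
    have hgf_le := hgf_mono ht ha hta
    simp only [Pi.sub_apply] at hgf_le
    rw [abs_of_nonpos (by linarith), abs_of_nonpos (by linarith)]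
    linarith

theorem hasDerivAt_log_one_add_sub_add_sq_div_two {t : ℝ} (ht : -1 < t) :
    HasDerivAt (fun x => Real.log (1 + x) - x + x ^ 2 / 2) (t ^ 2 / (1 + t)) t := by
  have h1t : 1 + t ≠ 0 := by linarith
  have hlog := ((hasDerivAt_id' t).const_add 1).log h1t
  refine ((hlog.sub (hasDerivAt_id' t)).add ((hasDerivAt_pow 2 t).div_const 2)).congr_deriv ?_
  field_simp
  ring

theorem hasDerivAt_pow_three_div_sqrt {t : ℝ} (ht : -1 < t) :
    HasDerivAt (fun x => x ^ 3 / √(5 * (1 + x)))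
      (t ^ 2 * (6 + 5 * t) / (2 * √(5 * (1 + t)) * (1 + t))) t := by
  have h5t : 0 < 5 * (1 + t) := by linarith
  have hsqrt := (((hasDerivAt_id' t).const_add 1).const_mul 5).sqrt h5t.ne'
  refine ((hasDerivAt_pow 3 t).div hsqrt (Real.sqrt_pos.2 h5t).ne').congr_deriv ?_
  have h1t : 1 + t ≠ 0 := by linarith
  have hsq : √(5 * (1 + t)) ^ 2 = 5 * (1 + t) := Real.sq_sqrt h5t.le
  field_simp
  rw [hsq]
  ring

theorem two_mul_sqrt_five_mul_one_add_le {t : ℝ} (ht : -1 < t) :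
    2 * √(5 * (1 + t)) ≤ 6 + 5 * t := by
  -- `(6 + 5t)² - 20 (1 + t) = (5t + 4)²`
  rw [← Real.sqrt_sq (zero_le_two : (0:ℝ) ≤ 2), ← Real.sqrt_mul (by norm_num)]
  refine Real.sqrt_le_iff.2 ⟨by linarith, ?_⟩
  nlinarith [sq_nonneg (5 * t + 4)]

theorem abs_log_one_add_sub_add_sq_div_two_le {t : ℝ} (ht : -1 < t) :
    |Real.log (1 + t) - t + t ^ 2 / 2| ≤ |t| ^ 3 / √(5 * (1 + t)) := by
  have key := abs_le_abs_of_hasDerivAt_of_deriv_le (convex_Ioi (-1 : ℝ))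
    (fun x hx => hasDerivAt_log_one_add_sub_add_sq_div_two hx)
    (fun x hx => hasDerivAt_pow_three_div_sqrt hx) ?_ ?_ (mem_Ioi.2 (by norm_num : (-1:ℝ) < 0))
    (by simp) (by simp) (mem_Ioi.2 ht)
  · rwa [abs_div, abs_pow, abs_of_nonneg (Real.sqrt_nonneg _)] at key
  · intro x hx
    have : 0 < 1 + x := by linarith [mem_Ioi.1 hx]
    positivity
  · intro x hx
    have h1x : 0 < 1 + x := by linarith [mem_Ioi.1 hx]
    have hsqrt : 0 < √(5 * (1 + x)) := Real.sqrt_pos.2 (by linarith)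
    rw [div_le_div_iff₀ h1x (by positivity)]
    have := mul_le_mul_of_nonneg_left (two_mul_sqrt_five_mul_one_add_le (mem_Ioi.1 hx))
      (mul_nonneg (sq_nonneg x) h1x.le)
    linarith

section Integral

variable {Ω : Type*} [MeasurableSpace Ω] {μ : Measure Ω}

theorem integral_abs_mul_le_sqrt_mul_sqrt {f g : Ω → ℝ} (hf : MemLp f 2 μ) (hg : MemLp g 2 μ) :
    ∫ ω, |f ω * g ω| ∂μ ≤ √(∫ ω, f ω ^ 2 ∂μ) * √(∫ ω, g ω ^ 2 ∂μ) := by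
  have := integral_mul_norm_le_Lp_mul_Lq Real.HolderConjugate.two_two
    (by simpa using hf) (by simpa using hg)
  simpa [abs_mul, Real.sqrt_eq_rpow, Real.rpow_two] using this

theorem abs_integral_log_one_add_sub_add_sq_div_two_le {X : Ω → ℝ} (hX : ∀ ω, -1 < X ω)
    (hX_meas : AEStronglyMeasurable X μ) (hX6 : Integrable (fun ω => X ω ^ 6) μ)
    (hinv : Integrable (fun ω => (1 + X ω)⁻¹) μ) :
    |∫ ω, (Real.log (1 + X ω) - X ω + X ω ^ 2 / 2) ∂μ| ≤
      √(∫ ω, (1 + X ω)⁻¹ ∂μ) * √((∫ ω, X ω ^ 6 ∂μ) / 5) := by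
  set f : Ω → ℝ := fun ω => |X ω| ^ 3 / √5
  set g : Ω → ℝ := fun ω => (√(1 + X ω))⁻¹
  have hf_sq : ∀ ω, f ω ^ 2 = X ω ^ 6 / 5 := fun ω => by
    rw [div_pow, Real.sq_sqrt (by norm_num), ← pow_mul, Even.pow_abs (by decide)]
  have hg_sq : ∀ ω, g ω ^ 2 = (1 + X ω)⁻¹ := fun ω => by
    simp only [g, inv_pow, Real.sq_sqrt (by linarith [hX ω] : 0 ≤ 1 + X ω)]
  have hf : MemLp f 2 μ := by
    refine (memLp_two_iff_integrable_sq ?_).2 ?_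
    · exact ((by fun_prop : Measurable fun x : ℝ => |x| ^ 3 / √5).comp_aemeasurable
        hX_meas.aemeasurable).aestronglyMeasurable
    · simpa only [hf_sq] using hX6.div_const 5
  have hg : MemLp g 2 μ := by
    refine (memLp_two_iff_integrable_sq ?_).2 ?_
    · exact ((by fun_prop : Measurable fun x : ℝ => (√(1 + x))⁻¹).comp_aemeasurable
        hX_meas.aemeasurable).aestronglyMeasurable
    · simpa only [hg_sq] using hinv
  have hbound : ∀ ω, |Real.log (1 + X ω) - X ω + X ω ^ 2 / 2| ≤ |f ω * g ω| := fun ω => by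
    have hfg : f ω * g ω = |X ω| ^ 3 / √(5 * (1 + X ω)) := by
      rw [Real.sqrt_mul (by norm_num), ← div_div, div_eq_mul_inv _ (√(1 + X ω))]
    exact hfg ▸ (abs_log_one_add_sub_add_sq_div_two_le (hX ω)).trans (le_abs_self _)
  calc |∫ ω, (Real.log (1 + X ω) - X ω + X ω ^ 2 / 2) ∂μ|
      ≤ ∫ ω, |f ω * g ω| ∂μ :=
        abs_integral_le_integral_abs.trans <| integral_mono_of_nonneg
          (.of_forall fun _ => abs_nonneg _) (hf.integrable_mul hg).abs (.of_forall hbound)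
    _ ≤ √(∫ ω, f ω ^ 2 ∂μ) * √(∫ ω, g ω ^ 2 ∂μ) := integral_abs_mul_le_sqrt_mul_sqrt hf hg
    _ = √(∫ ω, (1 + X ω)⁻¹ ∂μ) * √((∫ ω, X ω ^ 6 ∂μ) / 5) := by
        simp only [hf_sq, hg_sq, integral_div, mul_comm]

theorem abs_integral_log_one_add_add_half_integral_sq_le {X : Ω → ℝ} (hX : ∀ ω, -1 < X ω)
    (hX_int : Integrable X μ) (hX_mean : ∫ ω, X ω ∂μ = 0)
    (hlog : Integrable (fun ω => Real.log (1 + X ω)) μ)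
    (hX2 : Integrable (fun ω => X ω ^ 2) μ) (hX6 : Integrable (fun ω => X ω ^ 6) μ)
    (hinv : Integrable (fun ω => (1 + X ω)⁻¹) μ) :
    |∫ ω, Real.log (1 + X ω) ∂μ + 1 / 2 * ∫ ω, X ω ^ 2 ∂μ| ≤
      √(∫ ω, (1 + X ω)⁻¹ ∂μ) * √((∫ ω, X ω ^ 6 ∂μ) / 5) := by
  have hsplit : ∫ ω, (Real.log (1 + X ω) - X ω + X ω ^ 2 / 2) ∂μ =
      ∫ ω, Real.log (1 + X ω) ∂μ + 1 / 2 * ∫ ω, X ω ^ 2 ∂μ := by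
    rw [integral_add (f := fun ω => Real.log (1 + X ω) - X ω) (hlog.sub hX_int)
      (hX2.div_const 2), integral_sub hlog hX_int, hX_mean, integral_div]
    ring
  rw [← hsplit]
  exact abs_integral_log_one_add_sub_add_sq_div_two_le hX hX_int.aestronglyMeasurable hX6 hinv

end Integral

/-- Prop 1(c): bias of a Monte Carlo objective.  With `Δ = (p̂ - c)/c`,
`|log c − E[log p̂] − (1/2)E[Δ²]| ≤ (E[(1+Δ)⁻¹])^{1/2} (E[Δ⁶]/5)^{1/2}`. -/
theorem stmt_2 {Ω : Type*} [MeasurableSpace Ω] (μ : Measure Ω) [IsProbabilityMeasure μ]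
    (phat : Ω → ℝ) (c : ℝ) (hc : 0 < c) (hpos : ∀ ω, 0 < phat ω)
    (hint : Integrable phat μ) (hmean : ∫ ω, phat ω ∂μ = c)
    (hinv : Integrable (fun ω => (phat ω)⁻¹) μ)
    (Δ : Ω → ℝ) (hΔ : ∀ ω, Δ ω = (phat ω - c) / c)
    (hlogint : Integrable (fun ω => Real.log (phat ω)) μ)
    (hΔ2 : Integrable (fun ω => (Δ ω) ^ 2) μ)
    (hΔ6 : Integrable (fun ω => (Δ ω) ^ 6) μ) :
    |Real.log c - ∫ ω, Real.log (phat ω) ∂μ - (1 / 2) * ∫ ω, (Δ ω) ^ 2 ∂μ| ≤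
      Real.sqrt (∫ ω, (1 + Δ ω)⁻¹ ∂μ) * Real.sqrt ((∫ ω, (Δ ω) ^ 6 ∂μ) / 5) := by
  have h1Δ : ∀ ω, 1 + Δ ω = phat ω / c := fun ω => by rw [hΔ]; field_simp; ring
  have hΔ_gt : ∀ ω, -1 < Δ ω := fun ω => by linarith [h1Δ ω ▸ div_pos (hpos ω) hc]
  have hΔ_eq : Δ = fun ω => phat ω / c - 1 := funext fun ω => by linarith [h1Δ ω]
  have hΔ_int : Integrable Δ μ := hΔ_eq ▸ (hint.div_const c).sub (integrable_const 1)
  have hΔ_mean : ∫ ω, Δ ω ∂μ = 0 := by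
    rw [hΔ_eq, integral_sub (hint.div_const c) (integrable_const 1), integral_div, hmean]
    simp [hc.ne']
  have hlog_eq : ∀ ω, Real.log (phat ω) = Real.log c + Real.log (1 + Δ ω) := fun ω => by
    rw [h1Δ, Real.log_div (hpos ω).ne' hc.ne']
    ring
  have hlog : Integrable (fun ω => Real.log (1 + Δ ω)) μ := by
    refine (hlogint.sub (integrable_const (Real.log c))).congr (.of_forall fun ω => ?_)
    simp only [Pi.sub_apply, hlog_eq, add_sub_cancel_left]
  have hinvΔ : Integrable (fun ω => (1 + Δ ω)⁻¹) μ := by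
    simpa [h1Δ, div_eq_mul_inv, mul_comm] using hinv.const_mul c
  have hint_log : ∫ ω, Real.log (phat ω) ∂μ = Real.log c + ∫ ω, Real.log (1 + Δ ω) ∂μ := by
    simp_rw [hlog_eq]
    rw [integral_add (integrable_const _) hlog, integral_const, probReal_univ, one_smul]
  rw [hint_log, ← abs_neg]
  convert abs_integral_log_one_add_add_half_integral_sq_le hΔ_gt hΔ_int hΔ_mean hlog hΔ2 hΔ6
    hinvΔ using 2
  ring
end

section
/- Let Δ > −1 be a random variable with E[(1+Δ)^{-1}] < ∞ and E[Δ⁶] < ∞. Then |E[∫₀^Δ x²/(1+x) dx]| ≤ (E[(1+Δ)^{-1}])^{1/2} · (E[Δ⁶]/5)^{1/2}. -/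
/-!
Cauchy–Schwarz is used twice. On the interval between `0` and `t`, writing
`x² / (1 + x) = (1 + x)⁻¹ · x²` gives
`|∫₀^t x² / (1 + x)|² ≤ |∫₀^t (1 + x)⁻²| · |∫₀^t x⁴| = |t / (1 + t)| · |t⁵ / 5| = (1 + t)⁻¹ · t⁶ / 5`.
Taking expectations of this pointwise bound and applying Cauchy–Schwarz again, now in `L²(μ)`,
gives the theorem.
-/

open MeasureTheory Set Interval

section CauchySchwarz

variable {α : Type*} [MeasurableSpace α] {μ : Measure α}

theorem abs_integral_le_sqrt_integral_mul_sqrt_integral {F u v : α → ℝ}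
    (hu : Integrable u μ) (hv : Integrable v μ) (hu0 : 0 ≤ᵐ[μ] u) (hv0 : 0 ≤ᵐ[μ] v)
    (hF : ∀ᵐ x ∂μ, |F x| ≤ √(u x) * √(v x)) :
    |∫ x, F x ∂μ| ≤ √(∫ x, u x ∂μ) * √(∫ x, v x ∂μ) := by
  have memLp_sqrt : ∀ w : α → ℝ, Integrable w μ → 0 ≤ᵐ[μ] w → MemLp (fun x => √(w x)) 2 μ :=
    fun w hw hw0 => (memLp_two_iff_integrable_sq
      (Real.continuous_sqrt.comp_aestronglyMeasurable hw.1)).2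
      (hw.congr (hw0.mono fun x hx => (Real.sq_sqrt hx).symm))
  have integral_sqrt_rpow : ∀ w : α → ℝ, 0 ≤ᵐ[μ] w →
      (∫ x, √(w x) ^ (2 : ℝ) ∂μ) ^ (1 / (2 : ℝ)) = √(∫ x, w x ∂μ) := by
    intro w hw0
    rw [← Real.sqrt_eq_rpow]
    refine congrArg _ (integral_congr_ae (hw0.mono fun x hx => ?_))
    simp only [Real.rpow_two, Real.sq_sqrt hx]
  have hHolder := integral_mul_le_Lp_mul_Lq_of_nonneg Real.HolderConjugate.two_two
    (.of_forall fun x => Real.sqrt_nonneg (u x)) (.of_forall fun x => Real.sqrt_nonneg (v x))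
    (by simpa using memLp_sqrt u hu hu0) (by simpa using memLp_sqrt v hv hv0)
  rw [integral_sqrt_rpow u hu0, integral_sqrt_rpow v hv0] at hHolder
  calc |∫ x, F x ∂μ| ≤ ∫ x, |F x| ∂μ := abs_integral_le_integral_abs
    _ ≤ ∫ x, √(u x) * √(v x) ∂μ :=
        integral_mono_of_nonneg (.of_forall fun x => abs_nonneg _)
          ((memLp_sqrt u hu hu0).integrable_mul (memLp_sqrt v hv hv0)) hF
    _ ≤ √(∫ x, u x ∂μ) * √(∫ x, v x ∂μ) := hHolder

end CauchySchwarz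

section Remainder

variable {t : ℝ}

theorem one_add_pos_of_mem_uIcc (ht : -1 < t) {x : ℝ} (hx : x ∈ [[0, t]]) : 0 < 1 + x := by
  rcases mem_uIcc.1 hx with ⟨h, -⟩ | ⟨h, -⟩ <;> linarith

theorem intervalIntegrable_sq_inv_one_add (ht : -1 < t) :
    IntervalIntegrable (fun x => ((1 + x)⁻¹) ^ 2) volume 0 t :=
  (((continuousOn_const.add continuousOn_id).inv₀
    fun _ hx => (one_add_pos_of_mem_uIcc ht hx).ne').pow 2).intervalIntegrable

theorem integral_sq_inv_one_add (ht : -1 < t) :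
    ∫ x in (0 : ℝ)..t, ((1 + x)⁻¹) ^ 2 = t / (1 + t) := by
  have hderiv : ∀ x ∈ [[0, t]], HasDerivAt (fun y => -(1 + y)⁻¹) (((1 + x)⁻¹) ^ 2) x := by
    intro x hx
    refine (((hasDerivAt_id' x).const_add 1).inv
      (one_add_pos_of_mem_uIcc ht hx).ne').neg.congr_deriv ?_
    field_simp
  rw [intervalIntegral.integral_eq_sub_of_hasDerivAt hderiv
    (intervalIntegrable_sq_inv_one_add ht)]
  field_simp [(show (0 : ℝ) < 1 + t by linarith).ne']
  ring

theorem integral_uIoc_eq_abs_intervalIntegral {f : ℝ → ℝ} (hf : 0 ≤ f) :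
    ∫ x in Ι 0 t, f x = |∫ x in (0 : ℝ)..t, f x| := by
  rw [intervalIntegral.abs_integral_eq_abs_integral_uIoc,
    abs_of_nonneg (setIntegral_nonneg measurableSet_uIoc fun x _ => hf x)]

theorem abs_integral_sq_div_one_add_le (ht : -1 < t) :
    |∫ x in (0 : ℝ)..t, x ^ 2 / (1 + x)| ≤ √((1 + t)⁻¹) * √(t ^ 6 / 5) := by
  have hu : IntegrableOn (fun x : ℝ => ((1 + x)⁻¹) ^ 2) (Ι 0 t) :=
    intervalIntegrable_iff.1 (intervalIntegrable_sq_inv_one_add ht)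
  have hv : IntegrableOn (fun x : ℝ => (x ^ 2) ^ 2) (Ι 0 t) :=
    intervalIntegrable_iff.1
      ((by fun_prop : Continuous fun x : ℝ => (x ^ 2) ^ 2).intervalIntegrable 0 t)
  have hF : ∀ᵐ x ∂volume.restrict (Ι 0 t),
      |x ^ 2 / (1 + x)| ≤ √(((1 + x)⁻¹) ^ 2) * √((x ^ 2) ^ 2) := by
    filter_upwards [ae_restrict_mem measurableSet_uIoc] with x hx
    have := one_add_pos_of_mem_uIcc ht (uIoc_subset_uIcc hx)
    rw [Real.sqrt_sq (by positivity), Real.sqrt_sq (by positivity),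
      abs_of_nonneg (by positivity), div_eq_inv_mul]
  rw [intervalIntegral.abs_integral_eq_abs_integral_uIoc]
  calc _ ≤ √(∫ x in Ι 0 t, ((1 + x)⁻¹) ^ 2) * √(∫ x in Ι 0 t, (x ^ 2) ^ 2) :=
        abs_integral_le_sqrt_integral_mul_sqrt_integral hu hv
          (.of_forall fun x => by positivity) (.of_forall fun x => by positivity) hF
    _ = √|t / (1 + t)| * √|t ^ 5 / 5| := by
        rw [integral_uIoc_eq_abs_intervalIntegral (fun x => by positivity),
          integral_uIoc_eq_abs_intervalIntegral (fun x => by positivity),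
          integral_sq_inv_one_add ht]
        simp_rw [← pow_mul]
        norm_num [integral_pow]
    _ = √((1 + t)⁻¹) * √(t ^ 6 / 5) := by
        have h1t : 0 < 1 + t := by linarith
        rw [← Real.sqrt_mul (abs_nonneg _), ← Real.sqrt_mul (by positivity), ← abs_mul,
          show t / (1 + t) * (t ^ 5 / 5) = (1 + t)⁻¹ * (t ^ 6 / 5) by field_simp,
          abs_of_nonneg (by positivity)]

end Remainder

theorem stmt_4_general {Ω : Type*} [MeasurableSpace Ω] (μ : Measure Ω)
    (Δ : Ω → ℝ) (hΔ : ∀ ω, -1 < Δ ω)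
    (hinv : Integrable (fun ω => (1 + Δ ω)⁻¹) μ)
    (hΔ6 : Integrable (fun ω => (Δ ω) ^ 6) μ) :
    |∫ ω, (∫ x in (0 : ℝ)..(Δ ω), x ^ 2 / (1 + x)) ∂μ| ≤
      Real.sqrt (∫ ω, (1 + Δ ω)⁻¹ ∂μ) * Real.sqrt ((∫ ω, (Δ ω) ^ 6 ∂μ) / 5) := by
  have hinv_nonneg : ∀ ω, 0 ≤ (1 + Δ ω)⁻¹ := fun ω => inv_nonneg.2 (by linarith [hΔ ω])
  rw [← integral_div]
  exact abs_integral_le_sqrt_integral_mul_sqrt_integral hinv (hΔ6.div_const 5)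
    (.of_forall hinv_nonneg) (.of_forall fun ω => by positivity)
    (.of_forall fun ω => abs_integral_sq_div_one_add_le (hΔ ω))

/-- Expected Taylor remainder bound: if `Δ > -1` with integrable `(1+Δ)⁻¹` and `Δ⁶`, then
`|E[∫₀^Δ x²/(1+x) dx]| ≤ (E[(1+Δ)⁻¹])^{1/2} (E[Δ⁶]/5)^{1/2}`. -/
theorem stmt_4 {Ω : Type*} [MeasurableSpace Ω] (μ : Measure Ω) [IsProbabilityMeasure μ]
    (Δ : Ω → ℝ) (hΔ : ∀ ω, -1 < Δ ω)
    (hinv : Integrable (fun ω => (1 + Δ ω)⁻¹) μ)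
    (hΔ6 : Integrable (fun ω => (Δ ω) ^ 6) μ) :
    |∫ ω, (∫ x in (0 : ℝ)..(Δ ω), x ^ 2 / (1 + x)) ∂μ| ≤
      Real.sqrt (∫ ω, (1 + Δ ω)⁻¹ ∂μ) * Real.sqrt ((∫ ω, (Δ ω) ^ 6 ∂μ) / 5) :=
  stmt_4_general μ Δ hΔ hinv hΔ6
end

section
/- Let w₁, …, w_N be i.i.d. positive random variables and p̂_N = (1/N)·Σᵢ wᵢ. Then E[p̂_N^{-1}] ≤ E[w₁^{-1}]. -/
/-!
By the HM–GM inequality, `p̂_N⁻¹ ≤ ∏ᵢ (wᵢ⁻¹)^(1/N)` pointwise. Independence turns the expectation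
of the product into `(E[w₁^(-1/N)])^N`, and Lyapunov's inequality `‖f‖₁ ≤ ‖f‖_N` on a probability
space, applied to `f = w₁^(-1/N)`, bounds this by `E[w₁⁻¹]`. Everything is computed in `[0, ∞]`.
-/

open MeasureTheory ProbabilityTheory Finset
open scoped ENNReal

theorem Real.inv_mean_le_prod_inv_rpow {ι : Type*} [Fintype ι] [Nonempty ι] {z : ι → ℝ}
    (hz : ∀ i, 0 < z i) :
    ((Fintype.card ι : ℝ)⁻¹ * ∑ i, z i)⁻¹ ≤ ∏ i, (z i)⁻¹ ^ (Fintype.card ι : ℝ)⁻¹ := by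
  have hn : (Fintype.card ι : ℝ) ≠ 0 := by positivity
  have hm := Real.harm_mean_le_geom_mean_weighted univ (fun _ => (Fintype.card ι : ℝ)⁻¹)
    (fun i => (z i)⁻¹) univ_nonempty (fun _ _ => by positivity)
    (by simp [card_univ, hn]) (fun i _ => inv_pos.2 (hz i))
  simpa only [div_inv_eq_mul, ← mul_sum] using hm

theorem ENNReal.ofReal_inv_mean_le_prod_rpow {ι : Type*} [Fintype ι] [Nonempty ι] {z : ι → ℝ}
    (hz : ∀ i, 0 < z i) :
    ENNReal.ofReal ((Fintype.card ι : ℝ)⁻¹ * ∑ i, z i)⁻¹ ≤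
      ∏ i, ENNReal.ofReal (z i)⁻¹ ^ (Fintype.card ι : ℝ)⁻¹ := by
  have hnonneg : ∀ i, 0 ≤ (z i)⁻¹ := fun i => (inv_pos.2 (hz i)).le
  calc ENNReal.ofReal ((Fintype.card ι : ℝ)⁻¹ * ∑ i, z i)⁻¹
      ≤ ENNReal.ofReal (∏ i, (z i)⁻¹ ^ (Fintype.card ι : ℝ)⁻¹) :=
        ENNReal.ofReal_le_ofReal (Real.inv_mean_le_prod_inv_rpow hz)
    _ = ∏ i, ENNReal.ofReal (z i)⁻¹ ^ (Fintype.card ι : ℝ)⁻¹ := by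
        rw [ENNReal.ofReal_prod_of_nonneg fun i _ => Real.rpow_nonneg (hnonneg i) _]
        exact prod_congr rfl fun i _ =>
          (ENNReal.ofReal_rpow_of_nonneg (hnonneg i) (by positivity)).symm

theorem lintegral_rpow_inv_rpow_le {α : Type*} [MeasurableSpace α] (μ : Measure α)
    [IsProbabilityMeasure μ] {f : α → ℝ≥0∞} (hf : AEMeasurable f μ) {p : ℝ} (hp : 1 ≤ p) :
    (∫⁻ a, f a ^ p⁻¹ ∂μ) ^ p ≤ ∫⁻ a, f a ∂μ := by
  have hp0 : 0 < p := zero_lt_one.trans_le hp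
  have h := eLpNorm'_le_eLpNorm'_of_exponent_le zero_lt_one hp μ
    (hf.pow_const p⁻¹).aestronglyMeasurable
  simp only [eLpNorm'_eq_lintegral_enorm, enorm_eq_self, ENNReal.rpow_one, div_one,
    ← ENNReal.rpow_mul, inv_mul_cancel₀ hp0.ne'] at h
  calc (∫⁻ a, f a ^ p⁻¹ ∂μ) ^ p ≤ ((∫⁻ a, f a ∂μ) ^ (1 / p)) ^ p := by gcongr
    _ = ∫⁻ a, f a ∂μ := by
      rw [← ENNReal.rpow_mul, one_div, inv_mul_cancel₀ hp0.ne', ENNReal.rpow_one]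

/-- AM–GM / Lyapunov reduction: for i.i.d. positive `w₁,…,w_N` and
`p̂_N = (1/N)Σ wᵢ`, `E[p̂_N⁻¹] ≤ E[w₁⁻¹]` (in `[0,∞]`). -/
theorem stmt_7 {Ω : Type*} [MeasurableSpace Ω] (μ : Measure Ω) [IsProbabilityMeasure μ]
    (N : ℕ) [NeZero N] (w : Fin N → Ω → ℝ)
    (hpos : ∀ i ω, 0 < w i ω) (hmeas : ∀ i, Measurable (w i))
    (hindep : iIndepFun w μ)
    (hident : ∀ i, Measure.map (w i) μ = Measure.map (w 0) μ) :
    ∫⁻ ω, ENNReal.ofReal ((N : ℝ)⁻¹ * ∑ i, w i ω)⁻¹ ∂μ ≤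
      ∫⁻ ω, ENNReal.ofReal ((w 0 ω)⁻¹) ∂μ := by
  set φ : ℝ → ℝ≥0∞ := fun x => ENNReal.ofReal x⁻¹ ^ (N : ℝ)⁻¹
  have hφ : Measurable φ := (ENNReal.measurable_ofReal.comp measurable_inv).pow_const _
  have hfactor : ∀ i, ∫⁻ ω, φ (w i ω) ∂μ = ∫⁻ ω, φ (w 0 ω) ∂μ := fun i =>
    (IdentDistrib.comp ⟨(hmeas i).aemeasurable, (hmeas 0).aemeasurable, hident i⟩ hφ).lintegral_eq
  calc ∫⁻ ω, ENNReal.ofReal ((N : ℝ)⁻¹ * ∑ i, w i ω)⁻¹ ∂μ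
      ≤ ∫⁻ ω, ∏ i, φ (w i ω) ∂μ := lintegral_mono fun ω => by
        simpa only [Fintype.card_fin] using ENNReal.ofReal_inv_mean_le_prod_rpow (hpos · ω)
    _ = ∏ i, ∫⁻ ω, φ (w i ω) ∂μ := lintegral_prod_eq_prod_lintegral_of_indepFun _ _
        (hindep.comp (fun _ => φ) fun _ => hφ) fun i => hφ.comp (hmeas i)
    _ = (∫⁻ ω, φ (w 0 ω) ∂μ) ^ (N : ℝ) := by
        rw [prod_congr rfl fun i _ => hfactor i, prod_const, card_univ, Fintype.card_fin,
          ENNReal.rpow_natCast]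
    _ ≤ ∫⁻ ω, ENNReal.ofReal ((w 0 ω)⁻¹) ∂μ :=
        lintegral_rpow_inv_rpow_le μ (ENNReal.measurable_ofReal.comp (hmeas 0).inv).aemeasurable
          (by exact_mod_cast NeZero.one_le)
end

section
/- Let β₁ = 0 ≤ β₂ ≤ … ≤ β_{N+1} = 1, let z₁ ∼ q(·|x) and zᵢ ∼ Tᵢ(·|z_{i-1}, x) for i = 2,…,N, where each Markov kernel Tᵢ leaves the distribution with density proportional to q(z|x)^{1−βᵢ}·p(x,z)^{βᵢ} invariant. Under the assumption that each zᵢ is distributed according to this stationary distribution πᵢ, the estimator p̂ = Π_{i=1}^N (p(x,zᵢ)/q(zᵢ|x))^{β_{i+1}−βᵢ} satisfies E[log p̂] ≤ log p(x). -/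
open MeasureTheory Finset

/-!
Write `g_β = q^{1-β} p^β` and `Z(β) = ∫ g_β dν`, so that `Z(0) = 1` and `Z(1) = p(x)`.
Under the stationary distribution `π_β = g_β / Z(β)`, the `i`-th factor of `p̂` is
`(p/q)^{β' - β} = g_{β'} / g_β`, whose `π_β`-mean is `Z(β') / Z(β)`. Jensen's inequality for the
logarithm bounds the expected log of each factor by `log Z(β') - log Z(β)`, and these bounds
telescope to `log Z(1) - log Z(0) = log p(x)`.
-/

theorem Fin.sum_succ_sub_castSucc {M : Type*} [AddCommGroup M] :
    ∀ {N : ℕ} (f : Fin (N + 1) → M),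
      ∑ i : Fin N, (f i.succ - f i.castSucc) = f (Fin.last N) - f 0
  | 0, f => by simp
  | N + 1, f => by
    rw [Fin.sum_univ_castSucc]
    simp only [Fin.succ_castSucc]
    rw [Fin.sum_succ_sub_castSucc (fun i => f i.castSucc), Fin.succ_last, Fin.castSucc_zero]
    abel

section Integral

variable {α : Type*} [MeasurableSpace α] {μ : Measure α} {f g g' : α → ℝ}

theorem integral_pos_of_forall_pos [NeZero μ] (hf : ∀ x, 0 < f x) (hfi : Integrable f μ) :
    0 < ∫ x, f x ∂μ := by
  rw [integral_pos_iff_support_of_nonneg (fun x => (hf x).le) hfi,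
    Function.support_eq_univ fun x => (hf x).ne']
  exact Measure.measure_univ_pos.2 (NeZero.ne μ)

theorem integral_log_le_log_integral [IsProbabilityMeasure μ] (hf : ∀ x, 0 < f x)
    (hfi : Integrable f μ) (hlog : Integrable (fun x => Real.log (f x)) μ) :
    ∫ x, Real.log (f x) ∂μ ≤ Real.log (∫ x, f x ∂μ) := by
  set m := ∫ x, f x ∂μ
  have hm : 0 < m := integral_pos_of_forall_pos hf hfi
  have hgibbs : ∫ x, (Real.log (f x) - Real.log m) ∂μ ≤ ∫ x, (f x / m - 1) ∂μ := by
    refine integral_mono (hlog.sub (integrable_const _)) ((hfi.div_const m).sub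
      (integrable_const _)) fun x => ?_
    rw [← Real.log_div (hf x).ne' hm.ne']
    exact Real.log_le_sub_one_of_pos (div_pos (hf x) hm)
  rw [integral_sub hlog (integrable_const _), integral_sub (hfi.div_const m) (integrable_const _),
    integral_div, div_self hm.ne'] at hgibbs
  simpa using hgibbs

noncomputable def normalizedWithDensity (μ : Measure α) (g : α → ℝ) : Measure α :=
  (ENNReal.ofReal (∫ x, g x ∂μ))⁻¹ • μ.withDensity (fun x => ENNReal.ofReal (g x))

theorem integral_normalizedWithDensity (hg : Measurable g) (hg0 : ∀ x, 0 ≤ g x) (f : α → ℝ) :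
    ∫ x, f x ∂normalizedWithDensity μ g = (∫ x, g x ∂μ)⁻¹ * ∫ x, g x * f x ∂μ := by
  rw [normalizedWithDensity, integral_smul_measure, integral_withDensity_eq_integral_toReal_smul
    hg.ennreal_ofReal (ae_of_all _ fun _ => ENNReal.ofReal_lt_top), ENNReal.toReal_inv,
    ENNReal.toReal_ofReal (integral_nonneg hg0)]
  simp only [ENNReal.toReal_ofReal (hg0 _), smul_eq_mul]

theorem integrable_normalizedWithDensity_iff (hg : Measurable g) (hg0 : ∀ x, 0 ≤ g x)
    (hZ : 0 < ∫ x, g x ∂μ) :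
    Integrable f (normalizedWithDensity μ g) ↔ Integrable (fun x => g x * f x) μ := by
  rw [normalizedWithDensity, integrable_smul_measure (by simp) (by simp [hZ]),
    integrable_withDensity_iff_integrable_smul' hg.ennreal_ofReal
      (ae_of_all _ fun _ => ENNReal.ofReal_lt_top)]
  simp only [ENNReal.toReal_ofReal (hg0 _), smul_eq_mul]

theorem isProbabilityMeasure_normalizedWithDensity (hgi : Integrable g μ) (hg0 : ∀ x, 0 ≤ g x)
    (hZ : 0 < ∫ x, g x ∂μ) : IsProbabilityMeasure (normalizedWithDensity μ g) := by
  constructor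
  rw [normalizedWithDensity, Measure.smul_apply, withDensity_apply _ MeasurableSet.univ,
    Measure.restrict_univ, ← ofReal_integral_eq_lintegral_ofReal hgi (ae_of_all _ hg0), smul_eq_mul]
  exact ENNReal.inv_mul_cancel (by simpa using hZ) ENNReal.ofReal_ne_top

theorem integral_log_div_normalizedWithDensity_le (hg : Measurable g) (hgi : Integrable g μ)
    (hg'i : Integrable g' μ) (hgpos : ∀ x, 0 < g x) (hg'pos : ∀ x, 0 < g' x)
    (hZ : 0 < ∫ x, g x ∂μ)
    (hlog : Integrable (fun x => Real.log (g' x / g x)) (normalizedWithDensity μ g)) :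
    ∫ x, Real.log (g' x / g x) ∂normalizedWithDensity μ g ≤
      Real.log ((∫ x, g' x ∂μ) / ∫ x, g x ∂μ) := by
  have hg0 : ∀ x, 0 ≤ g x := fun x => (hgpos x).le
  have := isProbabilityMeasure_normalizedWithDensity hgi hg0 hZ
  have hcancel : (fun x => g x * (g' x / g x)) = g' :=
    funext fun x => mul_div_cancel₀ _ (hgpos x).ne'
  have hratio_int : Integrable (fun x => g' x / g x) (normalizedWithDensity μ g) := by
    rw [integrable_normalizedWithDensity_iff hg hg0 hZ, hcancel]
    exact hg'i
  calc ∫ x, Real.log (g' x / g x) ∂normalizedWithDensity μ g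
      ≤ Real.log (∫ x, g' x / g x ∂normalizedWithDensity μ g) :=
        integral_log_le_log_integral (fun x => div_pos (hg'pos x) (hgpos x)) hratio_int hlog
    _ = Real.log ((∫ x, g' x ∂μ) / ∫ x, g x ∂μ) := by
        rw [integral_normalizedWithDensity hg hg0, hcancel, inv_mul_eq_div]

end Integral

section Annealing

variable {Z : Type*} {p q : Z → ℝ} {β β' : ℝ}

noncomputable def annealedDensity (q p : Z → ℝ) (β : ℝ) (t : Z) : ℝ := q t ^ (1 - β) * p t ^ β

theorem annealedDensity_zero : annealedDensity q p 0 = q := by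
  ext t; simp [annealedDensity]

theorem annealedDensity_one : annealedDensity q p 1 = p := by
  ext t; simp [annealedDensity]

theorem annealedDensity_pos {t : Z} (hp : 0 < p t) (hq : 0 < q t) :
    0 < annealedDensity q p β t :=
  mul_pos (Real.rpow_pos_of_pos hq _) (Real.rpow_pos_of_pos hp _)

theorem measurable_annealedDensity [MeasurableSpace Z] (hpm : Measurable p)
    (hqm : Measurable q) :
    Measurable (annealedDensity q p β) :=
  (hqm.pow_const _).mul (hpm.pow_const _)

theorem log_annealedDensity_div {t : Z} (hp : 0 < p t) (hq : 0 < q t) :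
    Real.log (annealedDensity q p β' t / annealedDensity q p β t) =
      (β' - β) * Real.log (p t / q t) := by
  rw [Real.log_div (annealedDensity_pos hp hq).ne' (annealedDensity_pos hp hq).ne']
  simp only [annealedDensity]
  rw [Real.log_mul (Real.rpow_pos_of_pos hq _).ne' (Real.rpow_pos_of_pos hp _).ne',
    Real.log_mul (Real.rpow_pos_of_pos hq _).ne' (Real.rpow_pos_of_pos hp _).ne',
    Real.log_rpow hq, Real.log_rpow hp, Real.log_rpow hq, Real.log_rpow hp,
    Real.log_div hp.ne' hq.ne']
  ring

/-- Weighted AM-GM: `q^{1-β} p^β ≤ (1-β) q + β p`. -/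
theorem integrable_annealedDensity [MeasurableSpace Z] {ν : Measure Z}
    (hp : ∀ t, 0 ≤ p t) (hq : ∀ t, 0 ≤ q t)
    (hpm : Measurable p) (hqm : Measurable q) (hpi : Integrable p ν) (hqi : Integrable q ν)
    (hβ : β ∈ Set.Icc (0 : ℝ) 1) : Integrable (annealedDensity q p β) ν := by
  refine ((hqi.const_mul (1 - β)).add (hpi.const_mul β)).mono'
    (measurable_annealedDensity hpm hqm).aestronglyMeasurable (ae_of_all _ fun t => ?_)
  simp only [annealedDensity, Pi.add_apply]
  rw [Real.norm_of_nonneg (mul_nonneg (Real.rpow_nonneg (hq t) _) (Real.rpow_nonneg (hp t) _))]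
  exact Real.geom_mean_le_arith_mean2_weighted (by linarith [hβ.2]) hβ.1 (hq t) (hp t)
    (by ring)

noncomputable def annealedMeasure [MeasurableSpace Z] (ν : Measure Z) (q p : Z → ℝ) (β : ℝ) :
    Measure Z :=
  normalizedWithDensity ν (annealedDensity q p β)

section Measure

variable [MeasurableSpace Z] {ν : Measure Z} [NeZero ν]
  (hp : ∀ t, 0 < p t) (hq : ∀ t, 0 < q t) (hpm : Measurable p) (hqm : Measurable q)
  (hpi : Integrable p ν) (hqi : Integrable q ν)
  (hβ : β ∈ Set.Icc (0 : ℝ) 1) (hβ' : β' ∈ Set.Icc (0 : ℝ) 1)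
include hp hq hpm hqm hpi hqi hβ hβ'

theorem integral_mul_log_div_annealedMeasure_le
    (hlog : Integrable (fun t => Real.log (p t / q t)) (annealedMeasure ν q p β)) :
    ∫ t, (β' - β) * Real.log (p t / q t) ∂annealedMeasure ν q p β ≤
      Real.log (∫ t, annealedDensity q p β' t ∂ν) -
        Real.log (∫ t, annealedDensity q p β t ∂ν) := by
  have hint : ∀ {b : ℝ}, b ∈ Set.Icc (0 : ℝ) 1 → Integrable (annealedDensity q p b) ν :=
    fun hb => integrable_annealedDensity (fun t => (hp t).le) (fun t => (hq t).le) hpm hqm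
      hpi hqi hb
  have hZpos : ∀ {b : ℝ}, b ∈ Set.Icc (0 : ℝ) 1 → 0 < ∫ t, annealedDensity q p b t ∂ν :=
    fun hb => integral_pos_of_forall_pos (fun t => annealedDensity_pos (hp t) (hq t)) (hint hb)
  have hratio : (fun t => (β' - β) * Real.log (p t / q t)) =
      fun t => Real.log (annealedDensity q p β' t / annealedDensity q p β t) :=
    funext fun t => (log_annealedDensity_div (hp t) (hq t)).symm
  rw [← Real.log_div (hZpos hβ').ne' (hZpos hβ).ne', hratio]
  refine integral_log_div_normalizedWithDensity_le (measurable_annealedDensity hpm hqm)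
    (hint hβ) (hint hβ') (fun t => annealedDensity_pos (hp t) (hq t))
    (fun t => annealedDensity_pos (hp t) (hq t)) (hZpos hβ) ?_
  rw [← hratio]
  exact hlog.const_mul _

theorem integral_mul_log_div_comp_le_of_map_eq_annealedMeasure {Ω : Type*} [MeasurableSpace Ω]
    {μ : Measure Ω} {w : Ω → Z} (hwm : Measurable w) (hw : μ.map w = annealedMeasure ν q p β)
    (hlog : Integrable (fun ω => Real.log (p (w ω) / q (w ω))) μ) :
    ∫ ω, (β' - β) * Real.log (p (w ω) / q (w ω)) ∂μ ≤
      Real.log (∫ t, annealedDensity q p β' t ∂ν) -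
        Real.log (∫ t, annealedDensity q p β t ∂ν) := by
  have hlogm : Measurable fun t => Real.log (p t / q t) := (hpm.div hqm).log
  rw [← integral_map hwm.aemeasurable (hlogm.const_mul _).aestronglyMeasurable, hw]
  refine integral_mul_log_div_annealedMeasure_le hp hq hpm hqm hpi hqi hβ hβ' ?_
  rwa [← hw, integrable_map_measure hlogm.aestronglyMeasurable hwm.aemeasurable]

end Measure

end Annealing

theorem Real.log_prod_rpow {ι : Type*} (s : Finset ι) {x : ι → ℝ} (hx : ∀ i ∈ s, 0 < x i)
    (e : ι → ℝ) : Real.log (∏ i ∈ s, x i ^ e i) = ∑ i ∈ s, e i * Real.log (x i) := by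
  rw [Real.log_prod fun i hi => (Real.rpow_pos_of_pos (hx i hi) _).ne']
  exact sum_congr rfl fun i hi => Real.log_rpow (hx i hi) _

theorem stmt_13_general {Z Ω : Type*} [MeasurableSpace Z] [MeasurableSpace Ω]
    (ν : Measure Z) (μ : Measure Ω)
    (p q : Z → ℝ) (hp : ∀ z, 0 < p z) (hq : ∀ z, 0 < q z)
    (hpm : Measurable p) (hqm : Measurable q)
    (hqdens : ∫ z, q z ∂ν = 1)
    (px : ℝ) (hpx : ∫ z, p z ∂ν = px) (hpxpos : 0 < px)
    (N : ℕ) (β : Fin (N + 1) → ℝ)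
    (hβmono : Monotone β) (hβ0 : β 0 = 0) (hβlast : β (Fin.last N) = 1)
    (z : Fin N → Ω → Z) (hzm : ∀ i, Measurable (z i))
    -- each zᵢ is distributed according to the stationary distribution πᵢ with density
    -- proportional to q^{1-βᵢ} p^{βᵢ}
    (hstat : ∀ i : Fin N, Measure.map (z i) μ =
      (ENNReal.ofReal (∫ t, q t ^ (1 - β i.castSucc) * p t ^ (β i.castSucc) ∂ν))⁻¹ •
        ν.withDensity
          (fun t => ENNReal.ofReal (q t ^ (1 - β i.castSucc) * p t ^ (β i.castSucc))))
    (hlogint : ∀ i : Fin N,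
      Integrable (fun ω => Real.log (p (z i ω) / q (z i ω))) μ) :
    ∫ ω, Real.log (∏ i : Fin N,
        (p (z i ω) / q (z i ω)) ^ (β i.succ - β i.castSucc)) ∂μ ≤ Real.log px := by
  have : NeZero ν := ⟨fun h => by simp [h] at hqdens⟩
  have hpi : Integrable p ν := .of_integral_ne_zero (hpx ▸ hpxpos.ne')
  have hqi : Integrable q ν := .of_integral_ne_zero (by simp [hqdens])
  have hβ : ∀ j, β j ∈ Set.Icc (0 : ℝ) 1 :=
    fun j => ⟨hβ0 ▸ hβmono (Fin.zero_le j), hβlast ▸ hβmono (Fin.le_last j)⟩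
  have hlog_prod : ∀ ω, Real.log (∏ i : Fin N,
      (p (z i ω) / q (z i ω)) ^ (β i.succ - β i.castSucc)) =
        ∑ i : Fin N, (β i.succ - β i.castSucc) * Real.log (p (z i ω) / q (z i ω)) :=
    fun ω => Real.log_prod_rpow _ (fun i _ => div_pos (hp _) (hq _)) _
  calc _ = ∑ i : Fin N,
        ∫ ω, (β i.succ - β i.castSucc) * Real.log (p (z i ω) / q (z i ω)) ∂μ := by
        simp_rw [hlog_prod]
        exact integral_finsetSum _ fun i _ => (hlogint i).const_mul _
    _ ≤ ∑ i : Fin N, (Real.log (∫ t, annealedDensity q p (β i.succ) t ∂ν) -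
          Real.log (∫ t, annealedDensity q p (β i.castSucc) t ∂ν)) :=
        sum_le_sum fun i _ => integral_mul_log_div_comp_le_of_map_eq_annealedMeasure hp hq hpm
          hqm hpi hqi (hβ _) (hβ _) (hzm i) (hstat i) (hlogint i)
    _ = Real.log px := by
        rw [Fin.sum_succ_sub_castSucc (fun j => Real.log (∫ t, annealedDensity q p (β j) t ∂ν)),
          hβlast, hβ0, annealedDensity_one, annealedDensity_zero, hpx, hqdens, Real.log_one,
          sub_zero]

/-- AIS MCO bound: with `0 = β₁ ≤ … ≤ β_{N+1} = 1` and each `zᵢ` distributed according to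
the stationary density proportional to `q^{1-βᵢ} p^{βᵢ}`, the AIS estimator
`p̂ = Π (p(zᵢ)/q(zᵢ))^{β_{i+1}-βᵢ}` satisfies `E[log p̂] ≤ log p(x)`. -/
theorem stmt_13 {Z Ω : Type*} [MeasurableSpace Z] [MeasurableSpace Ω]
    (ν : Measure Z) [SigmaFinite ν] (μ : Measure Ω) [IsProbabilityMeasure μ]
    (p q : Z → ℝ) (hp : ∀ z, 0 < p z) (hq : ∀ z, 0 < q z)
    (hpm : Measurable p) (hqm : Measurable q)
    (hqdens : ∫ z, q z ∂ν = 1)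
    (px : ℝ) (hpx : ∫ z, p z ∂ν = px) (hpxpos : 0 < px)
    (N : ℕ) (hN : 0 < N) (β : Fin (N + 1) → ℝ)
    (hβmono : Monotone β) (hβ0 : β 0 = 0) (hβlast : β (Fin.last N) = 1)
    (z : Fin N → Ω → Z) (hzm : ∀ i, Measurable (z i))
    -- each zᵢ is distributed according to the stationary distribution πᵢ with density
    -- proportional to q^{1-βᵢ} p^{βᵢ}
    (hstat : ∀ i : Fin N, Measure.map (z i) μ =
      (ENNReal.ofReal (∫ t, q t ^ (1 - β i.castSucc) * p t ^ (β i.castSucc) ∂ν))⁻¹ •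
        ν.withDensity
          (fun t => ENNReal.ofReal (q t ^ (1 - β i.castSucc) * p t ^ (β i.castSucc))))
    (hlogint : ∀ i : Fin N,
      Integrable (fun ω => Real.log (p (z i ω) / q (z i ω))) μ) :
    ∫ ω, Real.log (∏ i : Fin N,
        (p (z i ω) / q (z i ω)) ^ (β i.succ - β i.castSucc)) ∂μ ≤ Real.log px :=
  stmt_13_general ν μ p q hp hq hpm hqm hqdens px hpx hpxpos N β hβmono hβ0 hβlast z hzm hstat
    hlogint
end

section
/- Consider a sequential latent variable model p(x_{1:T}, z_{1:T}) = Π_t p_t(x_t, z_t | x_{1:t-1}, z_{1:t-1}) satisfying p(z_{1:t-1} | x_{1:t}) = p(z_{1:t-1} | x_{1:t-1}) for each t ∈ {2,…,T}. If the proposal equals the filtering posterior, q_t(z_t | x_{1:t}, z_{1:t-1}) = p(z_t | z_{1:t-1}, x_{1:t}), then every incremental importance weight satisfies α_t(z_{1:t}) = p_t(x_t, z_t | x_{1:t-1}, z_{1:t-1}) / q_t(z_t | x_{1:t}, z_{1:t-1}) = p(x_{1:t}) / p(x_{1:t-1}), independent of z₁:t. -/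
/-- Core computation of Proposition 2: writing, at a fixed observation sequence and an
arbitrary latent trajectory `zs`, `Pxz t zs = p(x_{1:t}, z_{1:t})`, `Px t = p(x_{1:t})`
and `Zcond t zs = p(z_{1:t-1} | x_{1:t})`, the conditional-independence assumption
`p(z_{1:t-1}|x_{1:t}) = p(z_{1:t-1}|x_{1:t-1})` implies that the incremental importance
weight for the filtering-posterior proposal `q_t = p(z_t | z_{1:t-1}, x_{1:t})`,
`α_t = p_t(x_t, z_t | x_{1:t-1}, z_{1:t-1}) / q_t`, equals `p(x_{1:t})/p(x_{1:t-1})`,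
independently of the latent trajectory. -/
theorem stmt_15 {𝓩 : Type*} (T : ℕ)
    (Pxz : ℕ → (ℕ → 𝓩) → ℝ) (Px : ℕ → ℝ) (Zcond : ℕ → (ℕ → 𝓩) → ℝ)
    (hPxzpos : ∀ t zs, 0 < Pxz t zs) (hPxpos : ∀ t, 0 < Px t)
    -- conditional independence: p(z_{1:t-1} | x_{1:t}) = p(z_{1:t-1} | x_{1:t-1})
    (hCI : ∀ t, 2 ≤ t → t ≤ T → ∀ zs, Zcond t zs = Pxz (t - 1) zs / Px (t - 1)) :
    ∀ t, 2 ≤ t → t ≤ T → ∀ zs : ℕ → 𝓩,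
      -- α_t = (p(x_{1:t},z_{1:t})/p(x_{1:t-1},z_{1:t-1})) / q_t, with the proposal
      -- q_t = p(z_t | z_{1:t-1}, x_{1:t}) = (p(z_{1:t}|x_{1:t})) / p(z_{1:t-1}|x_{1:t})
      (Pxz t zs / Pxz (t - 1) zs) / ((Pxz t zs / Px t) / Zcond t zs) =
        Px t / Px (t - 1) := by
  intro t h2 hT zs
  rw [hCI t h2 hT zs]
  have h1 := (hPxzpos t zs).ne'
  have h2' := (hPxzpos (t-1) zs).ne'
  have h3 := (hPxpos t).ne'
  have h4 := (hPxpos (t-1)).ne'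
  field_simp
end
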